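/- Let 𝒜 be an abelian category and 𝒯 a full subcategory. The following are equivalent: (1) 𝒯 is a hereditary torsion class that is preenveloping (equivalently, semi-special preenveloping); (2) 𝒯 is a TTF class, i.e. simultaneously a torsion class and a torsion-free class; (3) 𝒯 is a cohereditary torsion-free class that is precovering (equivalently, semi-special precovering). -/

import Mathlib

/-!
Common definitions for formalizing results of "Tilting preenvelopes and cotilting
precovers in general Abelian categories" (Parra–Saorín–Virili).

Conventions:
* Full subcategories of an abelian category `C` are encoded as `Set C`.
* "Sets" (index sets of families, coproducts, …) are encoded as types in the universe `v`
  of the morphisms of `C`.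
* `Ext¹(X,Y) = 0` is encoded via the splitting of all short exact sequences
  `0 → Y → E → X → 0` (equivalently, the vanishing of the Yoneda Ext group).
* Relative (`…In B`) notions encode the corresponding notion computed inside the
  full (abelian exact) subcategory determined by `B : Set C`; the ambient case is
  `B = Set.univ`.
* Coproducts are not assumed to exist: a coproduct of a family existing in the
  (sub)category is encoded by a cocone with the universal property (`IsCoproductIn`).
-/

open CategoryTheory CategoryTheory.Limits

universe w v u

attribute [local instance] CategoryTheory.Abelian.hasFiniteBiproducts

namespace Paper

variable {C : Type u} [Category.{v} C] [Abelian C]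

/-- `(i, p)` is a short exact sequence `0 ⟶ A ⟶ E ⟶ B ⟶ 0` in `C`. -/
def IsShortExact {A E B : C} (i : A ⟶ E) (p : E ⟶ B) : Prop :=
  ∃ hw : i ≫ p = 0, (ShortComplex.mk i p hw).ShortExact

/-- `Q`, together with the injections `ι`, is the coproduct of the family `f`
inside the full subcategory determined by `B`. -/
structure IsCoproductIn (B : Set C) {I : Type v} (f : I → C) (Q : C)
    (ι : ∀ i, f i ⟶ Q) : Prop where
  mem : ∀ i, f i ∈ B
  memQ : Q ∈ B
  desc : ∀ Z ∈ B, ∀ g : (∀ i, f i ⟶ Z), ∃! h : Q ⟶ Z, ∀ i, ι i ≫ h = g i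

/-- `Ext¹(X, Y) = 0`, computed in the full subcategory determined by `B`:
every short exact sequence `0 → Y → E → X → 0` with `E ∈ B` splits. -/
def Ext1ZeroIn (B : Set C) (X Y : C) : Prop :=
  ∀ E ∈ B, ∀ (i : Y ⟶ E) (p : E ⟶ X), IsShortExact i p → ∃ r : E ⟶ Y, i ≫ r = 𝟙 Y

/-- `Ext¹(X, Y) = 0` in the ambient abelian category. -/
def Ext1Zero (X Y : C) : Prop := Ext1ZeroIn Set.univ X Y

/-- `V^{⊥₁}`, computed in (the full subcategory determined by) `B`. -/
def rightPerp (B : Set C) (V : C) : Set C := {A ∈ B | Ext1ZeroIn B V A}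

/-- `^{⊥₁}T`, computed in `B`. -/
def leftPerpSet (B T : Set C) : Set C := {A ∈ B | ∀ X ∈ T, Ext1ZeroIn B A X}

/-- `T^{⊥₁}`, computed in `B`. -/
def rightPerpSet (B T : Set C) : Set C := {A ∈ B | ∀ X ∈ T, Ext1ZeroIn B X A}

/-- `Sub(X)` relative to `B`: objects of `B` admitting a monomorphism into an object of `X`. -/
def subIn (B X : Set C) : Set C := {A ∈ B | ∃ T ∈ X, ∃ f : A ⟶ T, Mono f}

/-- `Quot(X)` relative to `B`: objects of `B` which are epimorphic images of objects of `X`. -/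
def quotIn (B X : Set C) : Set C := {A ∈ B | ∃ T ∈ X, ∃ f : T ⟶ A, Epi f}

/-- `(T, F)` is a torsion pair in (the full subcategory determined by) `B`. -/
structure IsTorsionPairIn (B T F : Set C) : Prop where
  eqF : F = {A ∈ B | ∀ X ∈ T, ∀ f : X ⟶ A, f = 0}
  eqT : T = {A ∈ B | ∀ Y ∈ F, ∀ f : A ⟶ Y, f = 0}
  seq : ∀ A ∈ B, ∃ (X Y : C) (i : X ⟶ A) (p : A ⟶ Y), X ∈ T ∧ Y ∈ F ∧ IsShortExact i p

/-- `T` is a torsion class in `B`. -/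
def IsTorsionClassIn (B T : Set C) : Prop := ∃ F, IsTorsionPairIn B T F

/-- `F` is a torsion-free class in `B`. -/
def IsTorsionFreeClassIn (B F : Set C) : Prop := ∃ T, IsTorsionPairIn B T F

/-- `φ : M ⟶ X` is a `T`-preenvelope. -/
structure IsPreenvelope (T : Set C) {M X : C} (φ : M ⟶ X) : Prop where
  mem : X ∈ T
  fac : ∀ T' ∈ T, ∀ g : M ⟶ T', ∃ h : X ⟶ T', φ ≫ h = g

/-- `φ` is a semi-special `T`-preenvelope (relative to `B`):
a `T`-preenvelope whose cokernel lies in `^{⊥₁}T` (computed in `B`). -/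
def IsSemiSpecialPreenvelopeIn (B T : Set C) {M X : C} (φ : M ⟶ X) : Prop :=
  IsPreenvelope T φ ∧ cokernel φ ∈ leftPerpSet B T

/-- `φ` is a special `T`-preenvelope (relative to `B`). -/
def IsSpecialPreenvelopeIn (B T : Set C) {M X : C} (φ : M ⟶ X) : Prop :=
  Mono φ ∧ IsSemiSpecialPreenvelopeIn B T φ

/-- `T` is preenveloping in `B`. -/
def PreenvelopingIn (B T : Set C) : Prop :=
  ∀ M ∈ B, ∃ (X : C) (φ : M ⟶ X), IsPreenvelope T φ

/-- `T` is semi-special preenveloping in `B`. -/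
def SemiSpecialPreenvelopingIn (B T : Set C) : Prop :=
  ∀ M ∈ B, ∃ (X : C) (φ : M ⟶ X), IsSemiSpecialPreenvelopeIn B T φ

/-- `T` is special preenveloping in `B`. -/
def SpecialPreenvelopingIn (B T : Set C) : Prop :=
  ∀ M ∈ B, ∃ (X : C) (φ : M ⟶ X), IsSpecialPreenvelopeIn B T φ

/-- `φ : X ⟶ M` is a `T`-precover. -/
structure IsPrecover (T : Set C) {X M : C} (φ : X ⟶ M) : Prop where
  mem : X ∈ T
  fac : ∀ T' ∈ T, ∀ g : T' ⟶ M, ∃ h : T' ⟶ X, h ≫ φ = g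

/-- `φ` is a semi-special `T`-precover (relative to `B`):
a `T`-precover whose kernel lies in `T^{⊥₁}` (computed in `B`). -/
def IsSemiSpecialPrecoverIn (B T : Set C) {X M : C} (φ : X ⟶ M) : Prop :=
  IsPrecover T φ ∧ kernel φ ∈ rightPerpSet B T

/-- `T` is precovering in `B`. -/
def PrecoveringIn (B T : Set C) : Prop :=
  ∀ M ∈ B, ∃ (X : C) (φ : X ⟶ M), IsPrecover T φ

/-- `T` is semi-special precovering in `B`. -/
def SemiSpecialPrecoveringIn (B T : Set C) : Prop :=
  ∀ M ∈ B, ∃ (X : C) (φ : X ⟶ M), IsSemiSpecialPrecoverIn B T φ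

/-- `Add(V)` relative to `B`: direct summands of coproducts (existing in `B`)
of copies of `V`. -/
def addIn (B : Set C) (V : C) : Set C :=
  {A ∈ B | ∃ (I : Type v) (Q : C) (ι : ∀ _ : I, V ⟶ Q),
     IsCoproductIn B (fun _ : I => V) Q ι ∧ ∃ (s : A ⟶ Q) (r : Q ⟶ A), s ≫ r = 𝟙 A}

/-- `Gen(V)` relative to `B`: quotients of objects of `Add(V)`. -/
def genIn (B : Set C) (V : C) : Set C :=
  {A ∈ B | ∃ X ∈ addIn B V, ∃ p : X ⟶ A, Epi p}

/-- `Pres(V)` relative to `B`: cokernels of morphisms between objects of `Add(V)`. -/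
def presIn (B : Set C) (V : C) : Set C :=
  {A ∈ B | ∃ X ∈ addIn B V, ∃ Y ∈ addIn B V,
     ∃ (f : X ⟶ Y) (c : Y ⟶ A) (hw : f ≫ c = 0), Epi c ∧ (ShortComplex.mk f c hw).Exact}

/-- `Ḡen(V) = Sub(Gen(V))` relative to `B`. -/
def barGenIn (B : Set C) (V : C) : Set C := subIn B (genIn B V)

/-- The class `X` is cogenerating in `B`. -/
def CogeneratingIn (B X : Set C) : Prop := ∀ A ∈ B, ∃ T ∈ X, ∃ f : A ⟶ T, Mono f

/-- The class `X` is generating in `B`. -/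
def GeneratingIn (B X : Set C) : Prop := ∀ A ∈ B, ∃ T ∈ X, ∃ f : T ⟶ A, Epi f

/-- `V` is a quasi-tilting object of (the full subcategory determined by) `B`:
`Gen(V)` is a torsion class and `Gen(V) = Pres(V) = Ḡen(V) ∩ V^{⊥₁}`. -/
def IsQuasiTiltingIn (B : Set C) (V : C) : Prop :=
  V ∈ B ∧ IsTorsionClassIn B (genIn B V) ∧ genIn B V = presIn B V ∧
    genIn B V = barGenIn B V ∩ rightPerp B V

/-- `V` is a tilting object of `B`: quasi-tilting with `Gen(V)` cogenerating. -/
def IsTiltingIn (B : Set C) (V : C) : Prop :=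
  IsQuasiTiltingIn B V ∧ CogeneratingIn B (genIn B V)

/-- `G` is an epi-generator of `B`: every object of `B` is an epimorphic image of a
coproduct (existing in `B`) of copies of `G`. -/
def IsEpiGeneratorIn (B : Set C) (G : C) : Prop :=
  G ∈ B ∧ ∀ A ∈ B, ∃ (I : Type v) (Q : C) (ι : ∀ _ : I, G ⟶ Q),
    IsCoproductIn B (fun _ : I => G) Q ι ∧ ∃ p : Q ⟶ A, Epi p

/-- `0 → A —u→ X → V^{(J)} → 0` is a universal extension of `V` by `A` (relative to `B`):
the right end of the sequence is a nonempty coproduct of copies of `V` existing in `B`,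
and the induced map `Ext¹(V,A) → Ext¹(V,X)` is zero (encoded: for every extension
`0 → A —i→ E → V → 0` with `E ∈ B`, its pushout along `u` splits, i.e. `u` extends
along `i`). -/
def IsUniversalExtensionIn (B : Set C) (V A X : C) (u : A ⟶ X) : Prop :=
  A ∈ B ∧ X ∈ B ∧
  (∃ (J : Type v) (_ : Nonempty J) (P : C) (κ : ∀ _ : J, V ⟶ P) (p : X ⟶ P),
     IsCoproductIn B (fun _ : J => V) P κ ∧ IsShortExact u p) ∧
  (∀ E ∈ B, ∀ (i : A ⟶ E) (q : E ⟶ V), IsShortExact i q → ∃ ψ : E ⟶ X, i ≫ ψ = u)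

/-- `V` is `Ext¹`-universal in `B`: universal extensions of `V` by every object exist. -/
def IsExt1UniversalIn (B : Set C) (V : C) : Prop :=
  ∀ A ∈ B, ∃ (X : C) (u : A ⟶ X), IsUniversalExtensionIn B V A X u

/-- `(X, Y)` is a cotorsion pair in (the full subcategory determined by) `B`. -/
def IsCotorsionPairIn (B X Y : Set C) : Prop :=
  Y = {A ∈ B | ∀ Z ∈ X, Ext1ZeroIn B Z A} ∧
  X = {A ∈ B | ∀ Z ∈ Y, Ext1ZeroIn B A Z}

/-- The pair `(X, Y)` is right complete in `B`: every `A ∈ B` admits a short exact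
sequence `0 → A → Y' → X' → 0` with `Y' ∈ Y`, `X' ∈ X`. -/
def RightCompleteIn (B X Y : Set C) : Prop :=
  ∀ A ∈ B, ∃ (Y' X' : C) (i : A ⟶ Y') (p : Y' ⟶ X'), Y' ∈ Y ∧ X' ∈ X ∧ IsShortExact i p

/-- The pair `(X, Y)` is left complete in `B`: every `A ∈ B` admits a short exact
sequence `0 → Y' → X' → A → 0` with `Y' ∈ Y`, `X' ∈ X`. -/
def LeftCompleteIn (B X Y : Set C) : Prop :=
  ∀ A ∈ B, ∃ (Y' X' : C) (i : Y' ⟶ X') (p : X' ⟶ A), Y' ∈ Y ∧ X' ∈ X ∧ IsShortExact i p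

/-- The full subcategory determined by `B` is reflective in `C`:
the (fully faithful) inclusion functor has a left adjoint. -/
def IsReflectiveSub (B : Set C) : Prop :=
  (ObjectProperty.ι (fun X : C => X ∈ B)).IsRightAdjoint

/-- The full subcategory determined by `B` is coreflective in `C`:
the inclusion functor has a right adjoint. -/
def IsCoreflectiveSub (B : Set C) : Prop :=
  (ObjectProperty.ι (fun X : C => X ∈ B)).IsLeftAdjoint

/-- `Ext²(V, A) = 0` (Yoneda `Ext²`): every `2`-fold extension
`0 → A —g→ X₁ —f→ X₀ —p→ V → 0` represents the trivial class, i.e. (by the standard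
long-exact-sequence criterion) the extension `0 → A → X₁ → im f → 0` extends to an
extension of `X₀` by `A`. -/
def Ext2Zero (V A : C) : Prop :=
  ∀ (X1 X0 : C) (g : A ⟶ X1) (f : X1 ⟶ X0) (p : X0 ⟶ V)
    (w1 : g ≫ f = 0) (w2 : f ≫ p = 0),
    Mono g → Epi p → (ShortComplex.mk g f w1).Exact → (ShortComplex.mk f p w2).Exact →
    ∃ (Y : C) (a : A ⟶ Y) (b : Y ⟶ X0), IsShortExact a b ∧
      ∃ φ : X1 ⟶ Y, g ≫ φ = a ∧ φ ≫ b = f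

/-- `V` has projective dimension at most `1`: `Ext²(V, A) = 0` for every `A`. -/
def ProjDimLE1 (V : C) : Prop := ∀ A : C, Ext2Zero V A

/-- The "elements" of the (possibly large) Yoneda `Ext¹(X, Y)`: short exact sequences
`0 → Y → E → X → 0`. -/
def ExtElem (X Y : C) : Type (max u v) :=
  Σ' (E : C) (i : Y ⟶ E) (p : E ⟶ X), IsShortExact i p

/-- Yoneda equivalence of extensions. -/
def extRel (X Y : C) : ExtElem X Y → ExtElem X Y → Prop :=
  fun e₁ e₂ => ∃ φ : e₁.1 ⟶ e₂.1, e₁.2.1 ≫ φ = e₂.2.1 ∧ φ ≫ e₂.2.2.1 = e₁.2.2.1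

/-- The (possibly large) Yoneda `Ext¹(X, Y)`, as the quotient of the collection
of extensions by Yoneda equivalence. -/
def ExtClass (X Y : C) : Type (max u v) := Quot (extRel X Y)

/-- `Ext¹(A, B)` is a finitely generated (right) `End(A)`-module: there are `n : ℕ` and a
short exact sequence `0 → B → X → A^n → 0` whose connecting map
`Hom(A, A^n) → Ext¹(A, B)` is surjective, i.e. every extension of `A` by `B` is a pullback
of the fixed one along some `h : A ⟶ A^n`. -/
def Ext1FGEnd (A B : C) : Prop :=
  ∃ (n : ℕ) (X : C) (u : B ⟶ X) (p : X ⟶ ⨁ (fun _ : Fin n => A)),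
    IsShortExact u p ∧
    ∀ (E : C) (i : B ⟶ E) (q : E ⟶ A), IsShortExact i q →
      ∃ (h : A ⟶ ⨁ (fun _ : Fin n => A)) (φ : E ⟶ X), i ≫ φ = u ∧ φ ≫ p = q ≫ h

/-- `∐¹_I f = 0`: for every `I`-indexed family of short exact sequences
`0 → Xᵢ → Yᵢ → fᵢ → 0`, the induced morphism `∐ Xᵢ → ∐ Yᵢ` between (existing)
coproducts is a monomorphism. -/
def CoprodDerivedZeroFam {I : Type v} (f : I → C) : Prop :=
  ∀ (X Y : I → C) (u : ∀ i, X i ⟶ Y i) (p : ∀ i, Y i ⟶ f i),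
    (∀ i, IsShortExact (u i) (p i)) →
    ∀ (QX QY : C) (ιX : ∀ i, X i ⟶ QX) (ιY : ∀ i, Y i ⟶ QY) (uu : QX ⟶ QY),
      IsCoproductIn Set.univ X QX ιX → IsCoproductIn Set.univ Y QY ιY →
      (∀ i, ιX i ≫ uu = u i ≫ ιY i) → Mono uu

/-- `∐¹_I V = 0` for the constant family at `V`. -/
def CoprodDerivedZero (I : Type v) (V : C) : Prop :=
  CoprodDerivedZeroFam (fun _ : I => V)

/-- Witness that the category `D` is `Hom`-finite: a commutative ring `R` together with an
`R`-linear structure on `D` for which all `Hom`-modules are finitely generated. -/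
structure HomFiniteStruct (D : Type u) [Category.{v} D] [Preadditive D] :
    Type (max u (v + 1)) where
  R : Type v
  [commRing : CommRing R]
  [linear : CategoryTheory.Linear R D]
  homFinite : ∀ A B : D, Module.Finite R (A ⟶ B)

/-- The category `D` is `Hom`-finite. -/
def HomFinite (D : Type u) [Category.{v} D] [Preadditive D] : Prop :=
  Nonempty (HomFiniteStruct D)

/-- `Q`, with injections `ι`, is a coproduct of the family `f` in an arbitrary category. -/
def IsCoproductCocone {D : Type u} [Category.{v} D] {I : Type w} (f : I → D) (Q : D)
    (ι : ∀ i, f i ⟶ Q) : Prop :=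
  ∀ (Z : D) (g : ∀ i, f i ⟶ Z), ∃! h : Q ⟶ Z, ∀ i, ι i ≫ h = g i

/-- The category `D` satisfies (Ab.4): it has all (small) coproducts, and coproducts
of monomorphisms are monomorphisms (for abelian categories, the latter is equivalent to
the exactness of coproducts). -/
def Ab4Type (D : Type u) [Category.{v} D] : Prop :=
  HasCoproducts.{v} D ∧
  ∀ (I : Type v) (X Y : I → D) (u : ∀ i, X i ⟶ Y i), (∀ i, Mono (u i)) →
    ∀ (QX QY : D) (ιX : ∀ i, X i ⟶ QX) (ιY : ∀ i, Y i ⟶ QY) (uu : QX ⟶ QY),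
      IsCoproductCocone X QX ιX → IsCoproductCocone Y QY ιY →
      (∀ i, ιX i ≫ uu = u i ≫ ιY i) → Mono uu

/-- The category `D` satisfies (Ab.5): it has all (small) coproducts and directed
(filtered) colimits of monomorphisms are monomorphisms (for abelian categories the
latter is equivalent to the exactness of directed colimits). -/
def Ab5Type (D : Type u) [Category.{v} D] : Prop :=
  HasCoproducts.{v} D ∧
  ∀ (J : Type v) [SmallCategory J] [IsFiltered J] (F G : J ⥤ D) (α : F ⟶ G),
    (∀ j, Mono (α.app j)) →
    ∀ (cF : Cocone F) (cG : Cocone G), IsColimit cF → IsColimit cG →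
      ∀ m : cF.pt ⟶ cG.pt, (∀ j, cF.ι.app j ≫ m = α.app j ≫ cG.ι.app j) → Mono m

/-- A ring `S` is left coherent: every finitely generated left ideal is finitely
presented as a left `S`-module. -/
def LeftCoherentRing (S : Type u) [Ring S] : Prop :=
  ∀ J : Submodule S S, J.FG → Module.FinitePresentation S J

/-- A ring `S` is right coherent: every finitely generated right ideal (i.e. finitely
generated left ideal of `Sᵐᵒᵖ`) is finitely presented as a right `S`-module. -/
def RightCoherentRing (S : Type u) [Ring S] : Prop :=
  ∀ J : Submodule Sᵐᵒᵖ Sᵐᵒᵖ, J.FG → Module.FinitePresentation Sᵐᵒᵖ J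

end Paper

/-!
STATEMENT 2 (Corollary `cor.special-preenveloping-hereditary`).
-/

namespace Stmt2

open Paper CategoryTheory CategoryTheory.Limits

variable {C : Type u} [Category.{v} C] [Abelian C]

/-- `𝒯` is a hereditary torsion class: a torsion class closed under subobjects. -/
def HereditaryTorsionClass (T : Set C) : Prop :=
  IsTorsionClassIn Set.univ T ∧
  ∀ ⦃A X : C⦄, X ∈ T → ∀ f : A ⟶ X, Mono f → A ∈ T

/-- `𝒯` is a cohereditary torsion-free class: a torsion-free class closed under
quotients. -/
def CohereditaryTorsionFreeClass (T : Set C) : Prop :=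
  IsTorsionFreeClassIn Set.univ T ∧
  ∀ ⦃X Q : C⦄, X ∈ T → ∀ p : X ⟶ Q, Epi p → Q ∈ T

/-- `𝒯` is a TTF class: simultaneously a torsion class and a torsion-free class. -/
def TTFClass (T : Set C) : Prop :=
  IsTorsionClassIn Set.univ T ∧ IsTorsionFreeClassIn Set.univ T

end Stmt2

/-
If `(𝒯, ℱ)` is a torsion pair with `𝒯` hereditary and `φ : M ⟶ X` is a `𝒯`-preenvelope, then
`ker φ` admits no nonzero map `g` to `𝒯`: the pushout of `0 → ker φ → M → coim φ → 0` along `g`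
is an extension of `coim φ ∈ 𝒯` by an object of `𝒯`, so `M ⟶ P` factors through `φ` and `g`
vanishes. Thus `0 → ker φ → M → coim φ → 0` is the torsion sequence of the torsion pair
`(⊥𝒯, 𝒯)`. Conversely, if `(𝒮, 𝒯)` is a torsion pair, the projection of `M` onto its
`𝒯`-part is an epimorphic `𝒯`-preenvelope, hence semi-special. The precover half is dual.
-/

namespace Paper

variable {C : Type u} [Category.{v} C] [Abelian C] {S T F : Set C}

lemma IsTorsionPairIn.hom_eq_zero (hp : IsTorsionPairIn Set.univ T F) {X Y : C} (hX : X ∈ T)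
    (hY : Y ∈ F) (f : X ⟶ Y) : f = 0 := by
  rw [hp.eqF] at hY
  exact hY.2 X hX f

lemma IsTorsionPairIn.mem_left_iff (hp : IsTorsionPairIn Set.univ T F) {A : C} :
    A ∈ T ↔ ∀ Y ∈ F, ∀ f : A ⟶ Y, f = 0 := by
  rw [hp.eqT]
  simp

lemma IsTorsionPairIn.mem_right_iff (hp : IsTorsionPairIn Set.univ T F) {A : C} :
    A ∈ F ↔ ∀ X ∈ T, ∀ f : X ⟶ A, f = 0 := by
  rw [hp.eqF]
  simp

lemma IsTorsionPairIn.mem_left_of_epi (hp : IsTorsionPairIn Set.univ T F) {X Q : C}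
    (hX : X ∈ T) (p : X ⟶ Q) [Epi p] : Q ∈ T :=
  hp.mem_left_iff.2 fun Y hY f =>
    (cancel_epi p).1 (by simpa using hp.hom_eq_zero hX hY (p ≫ f))

lemma IsTorsionPairIn.mem_right_of_mono (hp : IsTorsionPairIn Set.univ T F) {A Y : C}
    (hY : Y ∈ F) (f : A ⟶ Y) [Mono f] : A ∈ F :=
  hp.mem_right_iff.2 fun X hX g =>
    (cancel_mono f).1 (by simpa using hp.hom_eq_zero hX hY (g ≫ f))

lemma IsPreenvelope.kernel_hom_eq_zero (hp : IsTorsionPairIn Set.univ T F) {M X : C}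
    {φ : M ⟶ X} (hφ : IsPreenvelope T φ) (hcoim : Abelian.coimage φ ∈ T) {T' : C}
    (hT' : T' ∈ T) (g : kernel φ ⟶ T') : g = 0 := by
  have hP : pushout g (kernel.ι φ) ∈ T := by
    refine hp.mem_left_iff.2 fun Y hY h => ?_
    have hinl : pushout.inl g (kernel.ι φ) ≫ h = 0 := hp.hom_eq_zero hT' hY _
    obtain ⟨d, hd⟩ := CokernelCofork.IsColimit.desc' (cokernelIsCokernel (kernel.ι φ))
      (pushout.inr g (kernel.ι φ) ≫ h) (by rw [← pushout.condition_assoc, hinl, comp_zero])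
    have hinr : pushout.inr g (kernel.ι φ) ≫ h = 0 := by
      rw [← hd, hp.hom_eq_zero hcoim hY d, comp_zero]
    exact pushout.hom_ext (by rw [hinl, comp_zero]) (by rw [hinr, comp_zero])
  obtain ⟨e, he⟩ := hφ.fac _ hP (pushout.inr g (kernel.ι φ))
  rw [← cancel_mono (pushout.inl g (kernel.ι φ)), pushout.condition, ← he,
    kernel.condition_assoc, zero_comp, zero_comp]

lemma IsPrecover.cokernel_hom_eq_zero (hp : IsTorsionPairIn Set.univ F T) {X M : C}
    {φ : X ⟶ M} (hφ : IsPrecover T φ) (him : Abelian.image φ ∈ T) {T' : C}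
    (hT' : T' ∈ T) (g : T' ⟶ cokernel φ) : g = 0 := by
  have hP : pullback (cokernel.π φ) g ∈ T := by
    refine hp.mem_right_iff.2 fun Y hY h => ?_
    have hsnd : h ≫ pullback.snd (cokernel.π φ) g = 0 := hp.hom_eq_zero hY hT' _
    obtain ⟨d, hd⟩ := KernelFork.IsLimit.lift' (kernelIsKernel (cokernel.π φ))
      (h ≫ pullback.fst (cokernel.π φ) g) (by
        rw [Category.assoc, pullback.condition, ← Category.assoc, hsnd, zero_comp])
    have hfst : h ≫ pullback.fst (cokernel.π φ) g = 0 := by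
      rw [← hd, hp.hom_eq_zero hY him d, zero_comp]
    exact pullback.hom_ext (by rw [hfst, zero_comp]) (by rw [hsnd, zero_comp])
  obtain ⟨e, he⟩ := hφ.fac _ hP (pullback.fst (cokernel.π φ) g)
  rw [← cancel_epi (pullback.snd (cokernel.π φ) g), ← pullback.condition, ← he,
    Category.assoc, cokernel.condition, comp_zero, comp_zero]

lemma isTorsionPairIn_of_kernel_hom_eq_zero
    (hsub : ∀ ⦃A X : C⦄, X ∈ T → ∀ f : A ⟶ X, Mono f → A ∈ T)
    (hker : ∀ A : C, ∃ X ∈ T, ∃ φ : A ⟶ X, ∀ T' ∈ T, ∀ g : kernel φ ⟶ T', g = 0) :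
    IsTorsionPairIn Set.univ {A ∈ Set.univ | ∀ Y ∈ T, ∀ f : A ⟶ Y, f = 0} T where
  eqF := by
    ext A
    refine ⟨fun hA => ⟨trivial, fun X hX f => hX.2 A hA f⟩, fun ⟨_, hA⟩ => ?_⟩
    obtain ⟨X, hX, φ, hφ⟩ := hker A
    have : Mono φ := Abelian.mono_of_kernel_ι_eq_zero φ (hA _ ⟨trivial, hφ⟩ _)
    exact hsub hX φ this
  eqT := rfl
  seq A _ := by
    obtain ⟨X, hX, φ, hφ⟩ := hker A
    exact ⟨kernel φ, Abelian.coimage φ, kernel.ι φ, Abelian.coimage.π φ, ⟨trivial, hφ⟩,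
      hsub hX (Abelian.factorThruCoimage φ) inferInstance, cokernel.condition _,
      ShortComplex.ShortExact.mk' (ShortComplex.exact_of_g_is_cokernel _
        (cokernelIsCokernel _)) inferInstance inferInstance⟩

lemma isTorsionPairIn_of_cokernel_hom_eq_zero
    (hquot : ∀ ⦃X Q : C⦄, X ∈ T → ∀ p : X ⟶ Q, Epi p → Q ∈ T)
    (hcok : ∀ A : C, ∃ X ∈ T, ∃ φ : X ⟶ A, ∀ T' ∈ T, ∀ g : T' ⟶ cokernel φ, g = 0) :
    IsTorsionPairIn Set.univ T {A ∈ Set.univ | ∀ X ∈ T, ∀ f : X ⟶ A, f = 0} where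
  eqF := rfl
  eqT := by
    ext A
    refine ⟨fun hA => ⟨trivial, fun Y hY f => hY.2 A hA f⟩, fun ⟨_, hA⟩ => ?_⟩
    obtain ⟨X, hX, φ, hφ⟩ := hcok A
    have : Epi φ := Abelian.epi_of_cokernel_π_eq_zero φ (hA _ ⟨trivial, hφ⟩ _)
    exact hquot hX φ this
  seq A _ := by
    obtain ⟨X, hX, φ, hφ⟩ := hcok A
    exact ⟨Abelian.image φ, cokernel φ, Abelian.image.ι φ, cokernel.π φ,
      hquot hX (Abelian.factorThruImage φ) inferInstance, ⟨trivial, hφ⟩, kernel.condition _,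
      ShortComplex.ShortExact.mk' (ShortComplex.exact_of_f_is_kernel _
        (kernelIsKernel _)) inferInstance inferInstance⟩

lemma ext1ZeroIn_of_isZero_left (B : Set C) {Z : C} (hZ : IsZero Z) (X : C) :
    Ext1ZeroIn B Z X := by
  rintro E - i p ⟨w, hse⟩
  have := hse.mono_f
  have : Epi i := hse.exact.epi_f (hZ.eq_zero_of_tgt p)
  have : IsIso i := isIso_of_mono_of_epi i
  exact ⟨inv i, IsIso.hom_inv_id i⟩

lemma ext1ZeroIn_of_isZero_right (B : Set C) {Z : C} (hZ : IsZero Z) (X : C) :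
    Ext1ZeroIn B X Z :=
  fun _ _ _ _ _ => ⟨0, hZ.eq_of_src _ _⟩

lemma IsTorsionPairIn.semiSpecialPreenvelopingIn (hp : IsTorsionPairIn Set.univ S T) :
    SemiSpecialPreenvelopingIn Set.univ T := by
  intro M _
  obtain ⟨X, Y, i, p, hX, hY, _, hse⟩ := hp.seq M trivial
  have := hse.epi_g
  refine ⟨Y, p, ⟨hY, fun T' hT' g => ?_⟩, trivial,
    fun _ _ => ext1ZeroIn_of_isZero_left _ (isZero_cokernel_of_epi p) _⟩
  obtain ⟨d, hd⟩ := CokernelCofork.IsColimit.desc' hse.gIsCokernel g (hp.hom_eq_zero hX hT' _)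
  exact ⟨d, hd⟩

lemma IsTorsionPairIn.semiSpecialPrecoveringIn (hp : IsTorsionPairIn Set.univ T F) :
    SemiSpecialPrecoveringIn Set.univ T := by
  intro M _
  obtain ⟨X, Y, i, p, hX, hY, _, hse⟩ := hp.seq M trivial
  have := hse.mono_f
  refine ⟨X, i, ⟨hX, fun T' hT' g => ?_⟩, trivial,
    fun _ _ => ext1ZeroIn_of_isZero_right _ (isZero_kernel_of_mono i) _⟩
  obtain ⟨l, hl⟩ := KernelFork.IsLimit.lift' hse.fIsKernel g (hp.hom_eq_zero hT' hY _)
  exact ⟨l, hl⟩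

lemma SemiSpecialPreenvelopingIn.preenvelopingIn {B : Set C}
    (h : SemiSpecialPreenvelopingIn B T) : PreenvelopingIn B T := fun M hM =>
  let ⟨X, φ, hφ⟩ := h M hM
  ⟨X, φ, hφ.1⟩

lemma SemiSpecialPrecoveringIn.precoveringIn {B : Set C}
    (h : SemiSpecialPrecoveringIn B T) : PrecoveringIn B T := fun M hM =>
  let ⟨X, φ, hφ⟩ := h M hM
  ⟨X, φ, hφ.1⟩

end Paper

namespace Stmt2

open Paper CategoryTheory CategoryTheory.Limits

variable {C : Type u} [Category.{v} C] [Abelian C] {T : Set C}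

lemma HereditaryTorsionClass.ttfClass (h : HereditaryTorsionClass T)
    (hpe : PreenvelopingIn Set.univ T) : TTFClass T := by
  obtain ⟨⟨F, hp⟩, hsub⟩ := h
  refine ⟨⟨F, hp⟩, _, isTorsionPairIn_of_kernel_hom_eq_zero hsub fun A => ?_⟩
  obtain ⟨X, φ, hφ⟩ := hpe A trivial
  exact ⟨X, hφ.mem, φ, fun T' hT' g => hφ.kernel_hom_eq_zero hp
    (hsub hφ.mem (Abelian.factorThruCoimage φ) inferInstance) hT' g⟩

lemma CohereditaryTorsionFreeClass.ttfClass (h : CohereditaryTorsionFreeClass T)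
    (hpc : PrecoveringIn Set.univ T) : TTFClass T := by
  obtain ⟨⟨S, hp⟩, hquot⟩ := h
  refine ⟨⟨_, isTorsionPairIn_of_cokernel_hom_eq_zero hquot fun A => ?_⟩, S, hp⟩
  obtain ⟨X, φ, hφ⟩ := hpc A trivial
  exact ⟨X, hφ.mem, φ, fun T' hT' g => hφ.cokernel_hom_eq_zero hp
    (hquot hφ.mem (Abelian.factorThruImage φ) inferInstance) hT' g⟩

lemma TTFClass.hereditaryTorsionClass (h : TTFClass T) : HereditaryTorsionClass T :=
  let ⟨_, hp⟩ := h.2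
  ⟨h.1, fun _ _ hX f _ => hp.mem_right_of_mono hX f⟩

lemma TTFClass.cohereditaryTorsionFreeClass (h : TTFClass T) :
    CohereditaryTorsionFreeClass T :=
  let ⟨_, hp⟩ := h.1
  ⟨h.2, fun _ _ hX p _ => hp.mem_left_of_epi hX p⟩

theorem statement2 (T : Set C) :
    -- (1) preenveloping ⇔ semi-special preenveloping, for hereditary torsion classes
    ((HereditaryTorsionClass T ∧ PreenvelopingIn Set.univ T) ↔
      (HereditaryTorsionClass T ∧ SemiSpecialPreenvelopingIn Set.univ T)) ∧
    -- (1) ⇔ (2)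
    ((HereditaryTorsionClass T ∧ PreenvelopingIn Set.univ T) ↔ TTFClass T) ∧
    -- (2) ⇔ (3)
    (TTFClass T ↔ (CohereditaryTorsionFreeClass T ∧ PrecoveringIn Set.univ T)) ∧
    -- (3) precovering ⇔ semi-special precovering, for cohereditary torsion-free classes
    ((CohereditaryTorsionFreeClass T ∧ PrecoveringIn Set.univ T) ↔
      (CohereditaryTorsionFreeClass T ∧ SemiSpecialPrecoveringIn Set.univ T)) := by
  have h12 : HereditaryTorsionClass T ∧ PreenvelopingIn Set.univ T → TTFClass T :=
    fun ⟨h, hpe⟩ => h.ttfClass hpe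
  have h21 : TTFClass T → HereditaryTorsionClass T ∧ SemiSpecialPreenvelopingIn Set.univ T :=
    fun h => ⟨h.hereditaryTorsionClass, h.2.choose_spec.semiSpecialPreenvelopingIn⟩
  have h32 : CohereditaryTorsionFreeClass T ∧ PrecoveringIn Set.univ T → TTFClass T :=
    fun ⟨h, hpc⟩ => h.ttfClass hpc
  have h23 : TTFClass T →
      CohereditaryTorsionFreeClass T ∧ SemiSpecialPrecoveringIn Set.univ T :=
    fun h => ⟨h.cohereditaryTorsionFreeClass, h.1.choose_spec.semiSpecialPrecoveringIn⟩
  exact ⟨⟨fun h => h21 (h12 h), And.imp_right SemiSpecialPreenvelopingIn.preenvelopingIn⟩,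
    ⟨h12, fun h => (h21 h).imp_right SemiSpecialPreenvelopingIn.preenvelopingIn⟩,
    ⟨fun h => (h23 h).imp_right SemiSpecialPrecoveringIn.precoveringIn, h32⟩,
    ⟨fun h => h23 (h32 h), And.imp_right SemiSpecialPrecoveringIn.precoveringIn⟩⟩

end Stmt2
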